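/- arXiv:math/0306341 — 3 statements merged into one kernel-verified Lean document; each statement's English description precedes it below -/
import Mathlib

section
/- Let K be a compact Hausdorff topological group. The formula λ · (t, k₁, k₂) = (t + λ, k₁, k₁^λ k₂), for λ ∈ ℤ and (t, k₁, k₂) ∈ ℝ × K × K, defines a continuous action of ℤ on ℝ × K × K which is free and properly discontinuous, and the quotient map ℝ × K × K → (ℝ × K × K)/ℤ is a covering map. -/
/-!
The first coordinate `p(t, k₁, k₂) = t` intertwines the action with translation of `ℝ` by `ℤ`.
Hence the action is free, and an `n` moving a compact `L` to meet a compact `M` lies in the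
compact set `p(M) - p(L)`, so only finitely many do. A free, properly discontinuous action on the
locally compact Hausdorff space `ℝ × K × K` has its quotient map as a covering map.
-/

def zAct (K : Type*) [Group K] (n : ℤ) (x : ℝ × K × K) : ℝ × K × K :=
  (x.1 + n, x.2.1, x.2.1 ^ n * x.2.2)

open Pointwise

section Height

variable {X : Type*} [AddAction ℤ X]

theorem isCancelVAdd_of_map_vadd (p : X → ℝ) (hp : ∀ (n : ℤ) x, p (n +ᵥ x) = p x + n) :
    IsCancelVAdd ℤ X :=
  isCancelVAdd_iff_eq_zero_of_vadd_eq.2 fun n x h => by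
    have := hp n x
    rw [h] at this
    exact_mod_cast (add_eq_left.1 this.symm)

theorem properlyDiscontinuousVAdd_of_map_vadd [TopologicalSpace X] {p : X → ℝ}
    (hpc : Continuous p) (hp : ∀ (n : ℤ) x, p (n +ᵥ x) = p x + n) :
    ProperlyDiscontinuousVAdd ℤ X where
  finite_disjoint_inter_image {L M} hL hM := by
    refine (tendsto_cofinite_cocompact_iff.1 Int.tendsto_coe_cofinite _
      ((hM.image hpc).add (hL.image hpc).neg)).subset ?_
    rintro n ⟨_, ⟨x, hxL, rfl⟩, hxM⟩
    exact ⟨p (n +ᵥ x), ⟨_, hxM, rfl⟩, -p x, by simpa using ⟨x, hxL, rfl⟩, by rw [hp]; ring⟩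

end Height

section Action

variable {K : Type*} [Group K]

theorem zAct_zero (x : ℝ × K × K) : zAct K 0 x = x := by
  simp [zAct]

theorem zAct_add (m n : ℤ) (x : ℝ × K × K) :
    zAct K (m + n) x = zAct K m (zAct K n x) := by
  simp only [zAct, Int.cast_add, zpow_add, mul_assoc, add_comm (m : ℝ), add_assoc]

theorem fst_zAct (n : ℤ) (x : ℝ × K × K) : (zAct K n x).1 = x.1 + n := rfl

theorem continuous_zAct [TopologicalSpace K] [IsTopologicalGroup K] (n : ℤ) :
    Continuous (zAct K n) := by
  unfold zAct
  fun_prop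

variable (K) in
abbrev zActAddAction : AddAction ℤ (ℝ × K × K) where
  vadd := zAct K
  zero_vadd := zAct_zero
  add_vadd := zAct_add

attribute [local instance] zActAddAction

theorem zAct_rel_eq_orbitRel :
    (fun x y : ℝ × K × K => ∃ n : ℤ, zAct K n x = y) = (AddAction.orbitRel ℤ (ℝ × K × K)).r := by
  ext x y
  rw [Setoid.comm', AddAction.orbitRel_apply]
  rfl

end Action

/-- The formula `λ · (t, k₁, k₂) = (t + λ, k₁, k₁^λ k₂)` defines a continuous action
of `ℤ` on `ℝ × K × K` which is free and properly discontinuous, and the quotient map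
to the orbit space is a covering map. -/
theorem stmt3 (K : Type*) [Group K] [TopologicalSpace K] [IsTopologicalGroup K]
    [CompactSpace K] [T2Space K] :
    (∀ n : ℤ, Continuous (zAct K n)) ∧
    (∀ x, zAct K 0 x = x) ∧
    (∀ m n x, zAct K (m + n) x = zAct K m (zAct K n x)) ∧
    (∀ (n : ℤ) (x : ℝ × K × K), zAct K n x = x → n = 0) ∧
    (∀ L M : Set (ℝ × K × K), IsCompact L → IsCompact M →
      {n : ℤ | (zAct K n '' L ∩ M).Nonempty}.Finite) ∧
    IsCoveringMap (Quot.mk (fun x y : ℝ × K × K => ∃ n : ℤ, zAct K n x = y)) := by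
  let := zActAddAction K
  have : ContinuousConstVAdd ℤ (ℝ × K × K) := ⟨continuous_zAct⟩
  have := isCancelVAdd_of_map_vadd Prod.fst fun n x => fst_zAct (K := K) n x
  have := properlyDiscontinuousVAdd_of_map_vadd continuous_fst fun n x => fst_zAct (K := K) n x
  refine ⟨continuous_zAct, zAct_zero, zAct_add,
    fun _ x h => IsCancelVAdd.eq_zero_of_vadd (x := x) h,
    fun L M hL hM => ProperlyDiscontinuousVAdd.finite_disjoint_inter_image hL hM, ?_⟩
  rw [zAct_rel_eq_orbitRel]
  exact isAddQuotientCoveringMap_quotientMk_of_properlyDiscontinuousVAdd.isCoveringMap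
end

section
/- Let K be a compact Hausdorff topological group. The formula k · [t, k₁, k₂] = [t, k k₁ k⁻¹, k k₂] defines a well-defined continuous left action of K on D (the covering action); the map p: D → (ℝ/ℤ) × K, [t, k₁, k₂] ↦ ([t], k₁), is equivariant with respect to this action and the action of K on (ℝ/ℤ) × K given by k · (s, k₁) = (s, k k₁ k⁻¹); and this left action commutes with the right action [t, k₁, k₂] · k = [t, k₁, k₂ k]. -/
/-- The bundle `D = (ℝ × K × K)/ℤ`. -/
abbrev bundleD (K : Type*) [Group K] : Type _ :=
  Quot (fun x y : ℝ × K × K => ∃ n : ℤ, zAct K n x = y)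

/-
The map `(t, k₁, k₂) ↦ (t, k k₁ k⁻¹, k k₂)` commutes with the `ℤ`-action, because
`(k k₁ k⁻¹)^n k k₂ = k (k₁^n k₂)`, so it descends to `D`. Continuity of the descended
action follows because `K × (ℝ × K × K) → K × D` is a quotient map: the quotient by a
group acting by homeomorphisms is an open map, and products of open quotient maps are
quotient maps.
-/

namespace bundleD

variable {K : Type*} [Group K]

lemma zAct_zero (x : ℝ × K × K) : zAct K 0 x = x := by
  simp [zAct]

lemma zAct_add (m n : ℤ) (x : ℝ × K × K) : zAct K (m + n) x = zAct K m (zAct K n x) := by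
  simp only [zAct, Int.cast_add, zpow_add, mul_assoc, add_assoc, add_comm (n : ℝ)]

lemma equivalence_zAct : Equivalence (fun x y : ℝ × K × K => ∃ n : ℤ, zAct K n x = y) where
  refl x := ⟨0, zAct_zero x⟩
  symm := by
    rintro x _ ⟨n, rfl⟩
    exact ⟨-n, by rw [← zAct_add, neg_add_cancel, zAct_zero]⟩
  trans := by
    rintro x _ _ ⟨n, rfl⟩ ⟨m, rfl⟩
    exact ⟨m + n, zAct_add m n x⟩

lemma mk_eq_mk_iff {x y : ℝ × K × K} :
    (Quot.mk _ x : bundleD K) = Quot.mk _ y ↔ ∃ n : ℤ, zAct K n x = y :=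
  ⟨fun h => equivalence_zAct.eqvGen_iff.mp (Quot.eqvGen_exact h), fun h => Quot.sound h⟩

lemma preimage_image_mk (U : Set (ℝ × K × K)) :
    Quot.mk _ ⁻¹' (Quot.mk _ '' U : Set (bundleD K)) = ⋃ n : ℤ, zAct K n ⁻¹' U := by
  ext x
  simp only [Set.mem_preimage, Set.mem_image, Set.mem_iUnion]
  constructor
  · rintro ⟨y, hy, hyx⟩
    obtain ⟨n, rfl⟩ := mk_eq_mk_iff.mp hyx.symm
    exact ⟨n, hy⟩
  · rintro ⟨n, hn⟩
    exact ⟨zAct K n x, hn, mk_eq_mk_iff.mpr ⟨n, rfl⟩ |>.symm⟩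

def liftAct (k : K) (x : ℝ × K × K) : ℝ × K × K :=
  (x.1, k * x.2.1 * k⁻¹, k * x.2.2)

lemma zAct_liftAct (k : K) (n : ℤ) (x : ℝ × K × K) :
    zAct K n (liftAct k x) = liftAct k (zAct K n x) := by
  simp only [zAct, liftAct, conj_zpow]
  group

def coveringAct (k : K) : bundleD K → bundleD K :=
  Quot.map (liftAct k) fun x _ ⟨n, hn⟩ => ⟨n, hn ▸ zAct_liftAct k n x⟩

lemma coveringAct_mk (k : K) (x : ℝ × K × K) :
    coveringAct k (Quot.mk _ x) = Quot.mk _ (liftAct k x) :=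
  rfl

lemma coveringAct_one (d : bundleD K) : coveringAct 1 d = d := by
  induction d using Quot.ind
  simp [coveringAct_mk, liftAct]

lemma coveringAct_mul (k k' : K) (d : bundleD K) :
    coveringAct (k * k') d = coveringAct k (coveringAct k' d) := by
  induction d using Quot.ind
  simp [coveringAct_mk, liftAct, mul_assoc]

variable [TopologicalSpace K] [IsTopologicalGroup K]

lemma continuous_zAct (n : ℤ) : Continuous (zAct K n) := by
  unfold zAct
  fun_prop

lemma isOpenQuotientMap_mk : IsOpenQuotientMap (Quot.mk _ : ℝ × K × K → bundleD K) := by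
  refine ⟨Quot.exists_rep, continuous_quot_mk, fun U hU => ?_⟩
  rw [isOpen_coinduced, preimage_image_mk]
  exact isOpen_iUnion fun n => (continuous_zAct n).isOpen_preimage U hU

lemma continuous_coveringAct : Continuous fun z : K × bundleD K => coveringAct z.1 z.2 := by
  have hq : IsOpenQuotientMap (Prod.map id (Quot.mk _) : K × (ℝ × K × K) → K × bundleD K) :=
    IsOpenQuotientMap.id.prodMap isOpenQuotientMap_mk
  refine hq.isQuotientMap.continuous_iff.mpr (continuous_quot_mk.comp ?_)
  unfold liftAct
  fun_prop

end bundleD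

open bundleD in
theorem stmt5_general (K : Type*) [Group K] [TopologicalSpace K] [IsTopologicalGroup K] :
    ∃ lact : K → bundleD K → bundleD K,
      (∀ (k : K) (t : ℝ) (k₁ k₂ : K),
        lact k (Quot.mk _ (t, k₁, k₂)) = Quot.mk _ (t, k * k₁ * k⁻¹, k * k₂)) ∧
      Continuous (fun z : K × bundleD K => lact z.1 z.2) ∧
      (∀ d, lact 1 d = d) ∧
      (∀ k k' d, lact (k * k') d = lact k (lact k' d)) ∧
      (∀ p : bundleD K → UnitAddCircle × K,
        (∀ (t : ℝ) (k₁ k₂ : K),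
          p (Quot.mk _ (t, k₁, k₂)) = ((t : UnitAddCircle), k₁)) →
        ∀ (k : K) (d : bundleD K),
          p (lact k d) = ((p d).1, k * (p d).2 * k⁻¹)) ∧
      (∀ ract : bundleD K → K → bundleD K,
        (∀ (t : ℝ) (k₁ k₂ k : K),
          ract (Quot.mk _ (t, k₁, k₂)) k = Quot.mk _ (t, k₁, k₂ * k)) →
        ∀ (k : K) (d : bundleD K) (k' : K),
          lact k (ract d k') = ract (lact k d) k') := by
  refine ⟨coveringAct, fun _ _ _ _ => rfl, continuous_coveringAct, coveringAct_one,
    coveringAct_mul, ?equivariant, ?commute⟩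
  case equivariant =>
    rintro p hp k ⟨t, k₁, k₂⟩
    simp only [coveringAct_mk, liftAct, hp]
  case commute =>
    rintro ract hract k ⟨t, k₁, k₂⟩ k'
    simp only [coveringAct_mk, liftAct, hract, mul_assoc]

/-- `k · [t, k₁, k₂] = [t, k k₁ k⁻¹, k k₂]` is a well-defined continuous left action of
`K` on `D` (the covering action); the projection `p : D → (ℝ/ℤ) × K` is equivariant for
this action and conjugation on the second factor downstairs; and the left action
commutes with the right action `[t, k₁, k₂] · k = [t, k₁, k₂ k]`. -/
theorem stmt5 (K : Type*) [Group K] [TopologicalSpace K] [IsTopologicalGroup K]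
    [CompactSpace K] [T2Space K] :
    ∃ lact : K → bundleD K → bundleD K,
      (∀ (k : K) (t : ℝ) (k₁ k₂ : K),
        lact k (Quot.mk _ (t, k₁, k₂)) = Quot.mk _ (t, k * k₁ * k⁻¹, k * k₂)) ∧
      Continuous (fun z : K × bundleD K => lact z.1 z.2) ∧
      (∀ d, lact 1 d = d) ∧
      (∀ k k' d, lact (k * k') d = lact k (lact k' d)) ∧
      (∀ p : bundleD K → UnitAddCircle × K,
        (∀ (t : ℝ) (k₁ k₂ : K),
          p (Quot.mk _ (t, k₁, k₂)) = ((t : UnitAddCircle), k₁)) →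
        ∀ (k : K) (d : bundleD K),
          p (lact k d) = ((p d).1, k * (p d).2 * k⁻¹)) ∧
      (∀ ract : bundleD K → K → bundleD K,
        (∀ (t : ℝ) (k₁ k₂ k : K),
          ract (Quot.mk _ (t, k₁, k₂)) k = Quot.mk _ (t, k₁, k₂ * k)) →
        ∀ (k : K) (d : bundleD K) (k' : K),
          lact k (ract d k') = ract (lact k d) k') :=
  stmt5_general K
end

section
/- Let K be a compact Hausdorff topological group. Let Q = (ℝ × K^{2g} × K)/ℤ, where ℤ acts by λ · (t, X, k) = (t + λ, X, Φ(X)^λ k), and let P ⊆ ((ℝ/ℤ) × K^{2g}) × D be the fibre product P = { ((s, X), d) : p(d) = (s, Φ(X)) }, where p: D → (ℝ/ℤ) × K is the projection [t, k₁, k₂] ↦ ([t], k₁). Then the map Q → P sending the class of (t, X, k) to (([t], X), [t, Φ(X), k]) is well defined and is a homeomorphism, and it commutes with the natural projections of Q and P to (ℝ/ℤ) × K^{2g}. (This identifies the pullback of the bundle D under id × Φ with the quotient bundle Q.) -/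
/-!
`D` and `Q` are mapping tori of shears `(w, k) ↦ (w, ψ w * k)` of `W × K` (for `ψ = id` and
`ψ = Φ`), and the torus of `ψ ∘ f` is the pullback of the torus of `ψ` along `id × f`: the map
`[t, z, k] ↦ (([t], z), [t, f z, k])` is a continuous bijection onto the fibre product. Its
inverse is continuous because `ℤ` acts by homeomorphisms, so the quotient map
`ℝ × W × K → D` is open; hence its restriction over the fibre product is a quotient map, and
the inverse, lifted to the cover, is just `((s, z), (t, w, k)) ↦ [t, z, k]`.
-/

open scoped commutatorElement

/-- The moment map `Φ : K^{2g} → K`, `Φ(X₁, …, X_{2g}) = ∏_{j=1}^g [X_{2j-1}, X_{2j}]`. -/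
def momentMap (g : ℕ) {K : Type*} [Group K] (X : Fin (2 * g) → K) : K :=
  (List.ofFn (fun j : Fin g =>
    ⁅X ⟨2 * j.1, by have := j.2; omega⟩, X ⟨2 * j.1 + 1, by have := j.2; omega⟩⁆)).prod

open Function Set

section

variable {W Z K : Type*} [Group K]

-- `bundleD K` is `ClutchingBundle (id : K → K)`, and `Q` is `ClutchingBundle Φ`.
def clutchingAct (ψ : W → K) (n : ℤ) (x : ℝ × W × K) : ℝ × W × K :=
  (x.1 + n, x.2.1, ψ x.2.1 ^ n * x.2.2)

abbrev ClutchingBundle (ψ : W → K) : Type _ :=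
  Quot fun x y : ℝ × W × K => ∃ n : ℤ, clutchingAct ψ n x = y

namespace ClutchingBundle

variable (ψ : W → K) (f : Z → W)

abbrev mk : ℝ × W × K → ClutchingBundle ψ := Quot.mk _

lemma clutchingAct_zero (x : ℝ × W × K) : clutchingAct ψ 0 x = x := by
  simp [clutchingAct]

lemma clutchingAct_add (m n : ℤ) (x : ℝ × W × K) :
    clutchingAct ψ (m + n) x = clutchingAct ψ m (clutchingAct ψ n x) := by
  simp only [clutchingAct, Int.cast_add, zpow_add, mul_assoc, add_assoc, add_comm (n : ℝ)]

lemma clutchingAct_neg_self (n : ℤ) (x : ℝ × W × K) :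
    clutchingAct ψ (-n) (clutchingAct ψ n x) = x := by
  rw [← clutchingAct_add, neg_add_cancel, clutchingAct_zero]

lemma mk_eq_mk_iff {x y : ℝ × W × K} :
    mk ψ x = mk ψ y ↔ ∃ n : ℤ, clutchingAct ψ n x = y := by
  refine Quot.eq.trans (Equivalence.eqvGen_iff ⟨fun x => ⟨0, clutchingAct_zero ψ x⟩, ?_, ?_⟩)
  · rintro x _ ⟨n, rfl⟩
    exact ⟨-n, clutchingAct_neg_self ψ n x⟩
  · rintro x _ _ ⟨m, rfl⟩ ⟨n, rfl⟩
    exact ⟨n + m, clutchingAct_add ψ n m x⟩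

def proj : ClutchingBundle ψ → UnitAddCircle × W :=
  Quot.lift (fun x => ((x.1 : UnitAddCircle), x.2.1)) (by rintro x _ ⟨n, rfl⟩; simp [clutchingAct])

def map : ClutchingBundle (ψ ∘ f) → ClutchingBundle ψ :=
  Quot.map (fun x => (x.1, f x.2.1, x.2.2)) (by rintro x _ ⟨n, rfl⟩; exact ⟨n, rfl⟩)

abbrev Pullback : Type _ :=
  {y : (UnitAddCircle × Z) × ClutchingBundle ψ // proj ψ y.2 = (y.1.1, f y.1.2)}

def toPullback (x : ClutchingBundle (ψ ∘ f)) : Pullback ψ f :=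
  ⟨(proj (ψ ∘ f) x, map ψ f x), by induction x using Quot.ind; rfl⟩

lemma toPullback_mk_of_proj_eq {s : UnitAddCircle} {z : Z} {x : ℝ × W × K}
    (hx : proj ψ (mk ψ x) = (s, f z)) :
    toPullback ψ f (mk (ψ ∘ f) (x.1, z, x.2.2)) = ⟨((s, z), mk ψ x), hx⟩ := by
  obtain ⟨t, w, k⟩ := x
  obtain ⟨rfl, rfl⟩ := Prod.mk.inj hx
  rfl

lemma toPullback_surjective : Surjective (toPullback ψ f) := by
  rintro ⟨⟨⟨s, z⟩, d⟩, hd⟩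
  obtain ⟨x, rfl⟩ := Quot.exists_rep d
  exact ⟨_, toPullback_mk_of_proj_eq ψ f hd⟩

lemma toPullback_injective : Injective (toPullback ψ f) := by
  rintro ⟨t, z, k⟩ ⟨t', z', k'⟩ h
  obtain rfl : z = z' := congrArg (fun y => y.1.1.2) h
  obtain ⟨n, hn⟩ := (mk_eq_mk_iff ψ).mp (congrArg (fun y => y.1.2) h)
  simp only [clutchingAct, Prod.mk.injEq] at hn
  exact (mk_eq_mk_iff (ψ ∘ f)).mpr ⟨n, Prod.ext hn.1 (Prod.ext rfl hn.2.2)⟩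

noncomputable def toPullbackEquiv : ClutchingBundle (ψ ∘ f) ≃ Pullback ψ f :=
  Equiv.ofBijective _ ⟨toPullback_injective ψ f, toPullback_surjective ψ f⟩

lemma toPullbackEquiv_symm_apply_of_proj_eq {s : UnitAddCircle} {z : Z} {x : ℝ × W × K}
    (hx : proj ψ (mk ψ x) = (s, f z)) :
    (toPullbackEquiv ψ f).symm ⟨((s, z), mk ψ x), hx⟩ = mk (ψ ∘ f) (x.1, z, x.2.2) :=
  (Equiv.symm_apply_eq _).mpr (toPullback_mk_of_proj_eq ψ f hx).symm

variable [TopologicalSpace W] [TopologicalSpace Z] [TopologicalSpace K] {ψ f}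

lemma continuous_proj : Continuous (proj ψ) :=
  continuous_quot_lift _ ((AddCircle.continuous_mk' 1).comp continuous_fst |>.prodMk
    (continuous_fst.comp continuous_snd))

lemma continuous_map (hf : Continuous f) : Continuous (map ψ f) :=
  continuous_quot_lift _ (continuous_quot_mk.comp (by fun_prop))

lemma continuous_toPullback (hf : Continuous f) : Continuous (toPullback ψ f) :=
  (continuous_proj.prodMk (continuous_map hf)).subtype_mk _

variable [IsTopologicalGroup K]

lemma continuous_clutchingAct (hψ : Continuous ψ) (n : ℤ) : Continuous (clutchingAct ψ n) := by
  unfold clutchingAct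
  fun_prop

lemma isOpenQuotientMap_mk (hψ : Continuous ψ) : IsOpenQuotientMap (mk ψ) := by
  refine ⟨Quot.mk_surjective, continuous_quot_mk, fun U hU => ?_⟩
  have saturation : mk ψ ⁻¹' (mk ψ '' U) = ⋃ n : ℤ, clutchingAct ψ n ⁻¹' U := by
    ext x
    simp only [mem_preimage, mem_image, mem_iUnion, mk_eq_mk_iff]
    constructor
    · rintro ⟨u, hu, n, rfl⟩
      exact ⟨-n, by rwa [clutchingAct_neg_self]⟩
    · rintro ⟨n, hn⟩
      exact ⟨_, hn, -n, clutchingAct_neg_self ψ n x⟩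
  rw [← isQuotientMap_quot_mk.isOpen_preimage, saturation]
  exact isOpen_iUnion fun n => hU.preimage (continuous_clutchingAct hψ n)

lemma continuous_toPullbackEquiv_symm (hψ : Continuous ψ) :
    Continuous (toPullbackEquiv ψ f).symm := by
  let S : Set ((UnitAddCircle × Z) × ClutchingBundle ψ) := {y | proj ψ y.2 = (y.1.1, f y.1.2)}
  have hq := (IsOpenQuotientMap.id.prodMap (isOpenQuotientMap_mk hψ)).restrictPreimage S
  have lift : ∀ y : Prod.map id (mk ψ) ⁻¹' S, (toPullbackEquiv ψ f).symm (S.restrictPreimage _ y) =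
      mk (ψ ∘ f) (y.1.2.1, y.1.1.2, y.1.2.2.2) :=
    fun y => toPullbackEquiv_symm_apply_of_proj_eq ψ f y.2
  refine hq.isQuotientMap.continuous_iff.mpr ?_
  simp only [comp_def, lift]
  fun_prop

noncomputable def pullbackHomeomorph (hψ : Continuous ψ) (hf : Continuous f) :
    ClutchingBundle (ψ ∘ f) ≃ₜ Pullback ψ f where
  toEquiv := toPullbackEquiv ψ f
  continuous_toFun := continuous_toPullback hf
  continuous_invFun := continuous_toPullbackEquiv_symm hψ

end ClutchingBundle

end

lemma continuous_momentMap (g : ℕ) {K : Type*} [Group K] [TopologicalSpace K]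
    [IsTopologicalGroup K] : Continuous (momentMap g (K := K)) := by
  unfold momentMap
  simp only [List.ofFn_eq_map, commutatorElement_def]
  exact continuous_list_prod _ fun i _ => by fun_prop

theorem stmt8_general (g : ℕ) (K : Type*) [Group K] [TopologicalSpace K]
    [IsTopologicalGroup K]
    (p : bundleD K → UnitAddCircle × K)
    (hp : ∀ (t : ℝ) (k₁ k₂ : K),
      p (Quot.mk _ (t, k₁, k₂)) = ((t : UnitAddCircle), k₁)) :
    ∃ h : Quot (fun x y : ℝ × (Fin (2 * g) → K) × K =>
          ∃ n : ℤ, (x.1 + n, x.2.1, momentMap g x.2.1 ^ n * x.2.2) = y) ≃ₜ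
        {y : (UnitAddCircle × (Fin (2 * g) → K)) × bundleD K //
          p y.2 = (y.1.1, momentMap g y.1.2)},
      (∀ (t : ℝ) (X : Fin (2 * g) → K) (k : K),
        (h (Quot.mk _ (t, X, k)) :
            (UnitAddCircle × (Fin (2 * g) → K)) × bundleD K) =
          (((t : UnitAddCircle), X), Quot.mk _ (t, momentMap g X, k))) ∧
      ∃ prQ : Quot (fun x y : ℝ × (Fin (2 * g) → K) × K =>
            ∃ n : ℤ, (x.1 + n, x.2.1, momentMap g x.2.1 ^ n * x.2.2) = y) →
          UnitAddCircle × (Fin (2 * g) → K),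
        (∀ (t : ℝ) (X : Fin (2 * g) → K) (k : K),
          prQ (Quot.mk _ (t, X, k)) = ((t : UnitAddCircle), X)) ∧
        ∀ z, ((h z : (UnitAddCircle × (Fin (2 * g) → K)) × bundleD K)).1 = prQ z := by
  obtain rfl : p = ClutchingBundle.proj (id : K → K) :=
    funext <| Quot.ind fun x => hp x.1 x.2.1 x.2.2
  exact ⟨ClutchingBundle.pullbackHomeomorph continuous_id (continuous_momentMap g),
    fun _ _ _ => rfl, ClutchingBundle.proj _, fun _ _ _ => rfl, fun z => rfl⟩

/-- The quotient `Q = (ℝ × K^{2g} × K)/ℤ` (where `λ · (t, X, k) = (t + λ, X, Φ(X)^λ k)`)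
is homeomorphic, over `(ℝ/ℤ) × K^{2g}`, to the fibre product
`P = {((s, X), d) : p(d) = (s, Φ(X))}`, via the class of `(t, X, k)` mapping to
`(([t], X), [t, Φ(X), k])`. -/
theorem stmt8 (g : ℕ) (hg : 1 ≤ g) (K : Type*) [Group K] [TopologicalSpace K]
    [IsTopologicalGroup K] [CompactSpace K] [T2Space K]
    (p : bundleD K → UnitAddCircle × K)
    (hp : ∀ (t : ℝ) (k₁ k₂ : K),
      p (Quot.mk _ (t, k₁, k₂)) = ((t : UnitAddCircle), k₁)) :
    ∃ h : Quot (fun x y : ℝ × (Fin (2 * g) → K) × K =>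
          ∃ n : ℤ, (x.1 + n, x.2.1, momentMap g x.2.1 ^ n * x.2.2) = y) ≃ₜ
        {y : (UnitAddCircle × (Fin (2 * g) → K)) × bundleD K //
          p y.2 = (y.1.1, momentMap g y.1.2)},
      (∀ (t : ℝ) (X : Fin (2 * g) → K) (k : K),
        (h (Quot.mk _ (t, X, k)) :
            (UnitAddCircle × (Fin (2 * g) → K)) × bundleD K) =
          (((t : UnitAddCircle), X), Quot.mk _ (t, momentMap g X, k))) ∧
      ∃ prQ : Quot (fun x y : ℝ × (Fin (2 * g) → K) × K =>
            ∃ n : ℤ, (x.1 + n, x.2.1, momentMap g x.2.1 ^ n * x.2.2) = y) →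
          UnitAddCircle × (Fin (2 * g) → K),
        (∀ (t : ℝ) (X : Fin (2 * g) → K) (k : K),
          prQ (Quot.mk _ (t, X, k)) = ((t : UnitAddCircle), X)) ∧
        ∀ z, ((h z : (UnitAddCircle × (Fin (2 * g) → K)) × bundleD K)).1 = prQ z :=
  stmt8_general g K p hp
end
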